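/- arXiv:1607.03178 — 5 statements merged into one kernel-verified Lean document; each statement's English description precedes it below -/
import Mathlib

section
/- If S = R[x;δ] is a differential polynomial ring over a simple ring R and S is left quasi-duo (every maximal left ideal of S is two-sided), then R is a field and δ = 0. -/
open Finset

/-- `S` is a differential polynomial ring `R[x;δ]`: `δ` is a derivation on `R`,
`x * ι a = ι a * x + ι (δ a)`, and `S` is a free left `R`-module with basis `1, x, x², …`. -/
structure IsDiffPolyRing (R S : Type*) [Ring R] [Ring S]
    (ι : R →+* S) (x : S) (δ : R → R) : Prop where
  deriv_add : ∀ a b : R, δ (a + b) = δ a + δ b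
  deriv_mul : ∀ a b : R, δ (a * b) = a * δ b + δ a * b
  comm : ∀ a : R, x * ι a = ι a * x + ι (δ a)
  exists_repr : ∀ s : S, ∃ (n : ℕ) (c : ℕ → R),
    s = ∑ i ∈ Finset.range n, ι (c i) * x ^ i
  indep : ∀ (n : ℕ) (c : ℕ → R),
    (∑ i ∈ Finset.range n, ι (c i) * x ^ i) = 0 → ∀ i < n, c i = 0

/-- A left ideal is two-sided if it absorbs multiplication on the right. -/
def IdealIsTwoSided {S : Type*} [Ring S] (M : Ideal S) : Prop :=
  ∀ a ∈ M, ∀ s : S, a * s ∈ M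

/-- A ring is left quasi-duo if every maximal left ideal is two-sided. -/
def IsLeftQuasiDuo (S : Type*) [Ring S] : Prop :=
  ∀ M : Ideal S, M.IsMaximal → IdealIsTwoSided M

/-- A ring is right quasi-duo if every maximal right ideal is two-sided;
equivalently, its opposite ring is left quasi-duo. -/
def IsRightQuasiDuo (S : Type*) [Ring S] : Prop := IsLeftQuasiDuo Sᵐᵒᵖ

section aux
variable {R S : Type*} [Ring R] [Ring S] (ι : R →+* S) (x : S)

/-- Padding a sum with zero coefficients. -/
lemma aux_pad {n N : ℕ} (h : n ≤ N) (c : ℕ → R) :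
    ∑ i ∈ range n, ι (c i) * x ^ i
      = ∑ i ∈ range N, ι (if i < n then c i else 0) * x ^ i := by
  rw [← Finset.sum_subset (Finset.range_subset_range.mpr h)
      (fun i _ hi => by
        rw [if_neg (fun hlt => hi (Finset.mem_range.mpr hlt)), map_zero, zero_mul])]
  exact Finset.sum_congr rfl fun i hi => by rw [if_pos (Finset.mem_range.mp hi)]

/-- Reindexing a shifted sum. -/
lemma aux_shift (n : ℕ) (c : ℕ → R) :
    ∑ i ∈ range n, ι (c i) * x ^ (i + 1)
      = ∑ i ∈ range (n + 1), ι (if i = 0 then 0 else c (i - 1)) * x ^ i := by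
  rw [Finset.sum_range_succ' (fun i => ι (if i = 0 then 0 else c (i - 1)) * x ^ i) n]
  simp

/-- A sum concentrated in degree `0`. -/
lemma aux_single {N : ℕ} (hN : 0 < N) (r : R) :
    ∑ i ∈ range N, ι (if i = 0 then r else 0) * x ^ i = ι r := by
  rw [Finset.sum_eq_single 0]
  · simp
  · intro b _ hb; rw [if_neg hb, map_zero, zero_mul]
  · intro hb; exact absurd (Finset.mem_range.mpr hN) hb

/-- Descending induction showing all coefficients vanish. -/
lemma aux_desc {n : ℕ} (a : R) (c : ℕ → R)
    (h : ∀ j < n, c j = if j + 1 < n then c (j + 1) * a else 0) :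
    ∀ j < n, c j = 0 := by
  have key : ∀ k, ∀ j, j < n → n - j = k + 1 → c j = 0 := by
    intro k
    induction k with
    | zero =>
      intro j hj hk
      rw [h j hj, if_neg (by omega)]
    | succ k ih =>
      intro j hj hk
      rw [h j hj, if_pos (by omega), ih (j + 1) (by omega) (by omega), zero_mul]
  intro j hj
  exact key (n - j - 1) j hj (by omega)

end aux

/-- If `S = R[x;δ]` is a left quasi-duo differential polynomial ring over a simple
ring `R`, then `R` is a field and `δ = 0`. -/
theorem stmt0 {R S : Type*} [Ring R] [Nontrivial R] [Ring S]
    (ι : R →+* S) (x : S) (δ : R → R) (h : IsDiffPolyRing R S ι x δ)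
    (hsimple : ∀ I : Ideal R, IdealIsTwoSided I → I = ⊥ ∨ I = ⊤)
    (hqd : IsLeftQuasiDuo S) :
    IsField R ∧ ∀ r : R, δ r = 0 := by
  -- Every proper left ideal is contained in a two-sided maximal left ideal whose
  -- contraction to `R` is zero (by simplicity of `R`).
  have key : ∀ J : Ideal S, J ≠ ⊤ →
      ∃ M : Ideal S, J ≤ M ∧ IdealIsTwoSided M ∧ (∀ r : R, ι r ∈ M → r = 0) := by
    intro J hJ
    obtain ⟨M, hMmax, hJM⟩ := Ideal.exists_le_maximal J hJ
    have h2 : IdealIsTwoSided M := hqd M hMmax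
    refine ⟨M, hJM, h2, ?_⟩
    have htwo : IdealIsTwoSided (Ideal.comap ι M) := by
      intro a ha r
      have : ι (a * r) ∈ M := by
        rw [map_mul]; exact h2 (ι a) ha (ι r)
      exact this
    rcases hsimple _ htwo with hbot | htop
    · intro r hr
      have hmem : r ∈ Ideal.comap ι M := hr
      rw [hbot] at hmem
      exact Ideal.mem_bot.mp hmem
    · exfalso
      have hone : (1 : R) ∈ Ideal.comap ι M := htop ▸ Submodule.mem_top
      rw [Ideal.mem_comap, map_one] at hone
      exact hMmax.ne_top ((Ideal.eq_top_iff_one M).mpr hone)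
  -- multiplying a canonical form by `x` on the right
  have mulx_repr : ∀ (n : ℕ) (c : ℕ → R),
      (∑ i ∈ range n, ι (c i) * x ^ i) * x = ∑ i ∈ range n, ι (c i) * x ^ (i + 1) := by
    intro n c
    rw [Finset.sum_mul]
    exact Finset.sum_congr rfl fun i _ => by rw [mul_assoc, ← pow_succ]
  -- Step 1: `Sx` is a proper left ideal.
  have hspanx : Ideal.span {x} ≠ ⊤ := by
    rw [Ne, Ideal.eq_top_iff_one]
    intro h1
    rw [Ideal.span, Submodule.mem_span_singleton] at h1
    obtain ⟨f, hf⟩ := h1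
    rw [smul_eq_mul] at hf
    obtain ⟨n, c, hc⟩ := h.exists_repr f
    have heq : ∑ i ∈ range (n + 1),
        ι ((if i = 0 then (0 : R) else c (i - 1)) - (if i = 0 then 1 else 0)) * x ^ i = 0 := by
      simp only [map_sub, sub_mul, Finset.sum_sub_distrib]
      rw [← aux_shift ι x n c, aux_single ι x (Nat.succ_pos n) 1, map_one, ← mulx_repr n c,
        ← hc, hf, sub_self]
    have h0 := h.indep (n + 1) _ heq 0 (Nat.succ_pos n)
    simp at h0
  -- Step 2: `δ = 0`.
  obtain ⟨M0, hM0le, hM0two, hM0inj⟩ := key (Ideal.span {x}) hspanx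
  have hxM : x ∈ M0 := hM0le (Ideal.subset_span rfl)
  have hδ0 : ∀ r : R, δ r = 0 := by
    intro r
    apply hM0inj
    have h1 : x * ι r ∈ M0 := hM0two x hxM (ι r)
    have h2 : ι r * x ∈ M0 := Ideal.mul_mem_left M0 (ι r) hxM
    have h3 : ι (δ r) = x * ι r - ι r * x := by rw [h.comm r]; abel
    rw [h3]; exact sub_mem h1 h2
  -- Step 3: `x` commutes with `ι R`.
  have hx : ∀ r : R, x * ι r = ι r * x := by
    intro r; rw [h.comm r, hδ0 r, map_zero, add_zero]
  have hxp : ∀ (i : ℕ) (r : R), x ^ i * ι r = ι r * x ^ i := by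
    intro i r
    induction i with
    | zero => simp
    | succ i ih => rw [pow_succ, mul_assoc, hx r, ← mul_assoc, ih, mul_assoc]
  have smul_repr : ∀ (n : ℕ) (c : ℕ → R) (a : R),
      (∑ i ∈ range n, ι (c i) * x ^ i) * ι a = ∑ i ∈ range n, ι (c i * a) * x ^ i := by
    intro n c a
    rw [Finset.sum_mul]
    exact Finset.sum_congr rfl fun i _ => by
      rw [mul_assoc, hxp i a, ← mul_assoc, ← map_mul]
  -- Step 4: `S(x - ι a)` is a proper left ideal for every `a`.
  have hspan_ne : ∀ a : R, Ideal.span {x - ι a} ≠ ⊤ := by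
    intro a
    rw [Ne, Ideal.eq_top_iff_one]
    intro h1
    rw [Ideal.span, Submodule.mem_span_singleton] at h1
    obtain ⟨f, hf⟩ := h1
    rw [smul_eq_mul] at hf
    obtain ⟨n, c, hc⟩ := h.exists_repr f
    set e : ℕ → R := fun i => (if i = 0 then 0 else c (i - 1))
      - (if i < n then c i * a else 0) - (if i = 0 then 1 else 0) with he
    have heq : ∑ i ∈ range (n + 1), ι (e i) * x ^ i = 0 := by
      simp only [he, map_sub, sub_mul, Finset.sum_sub_distrib]
      rw [← aux_shift ι x n c, aux_single ι x (Nat.succ_pos n) 1, map_one,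
        ← aux_pad ι x (Nat.le_succ n) (fun i => c i * a)]
      have h2 : f * (x - ι a)
          = (∑ i ∈ range n, ι (c i) * x ^ (i + 1)) - ∑ i ∈ range n, ι (c i * a) * x ^ i := by
        rw [mul_sub, hc, smul_repr n c a, mulx_repr n c]
      have := h2.symm.trans hf
      rw [sub_eq_iff_eq_add] at this ⊢
      rw [this]; abel
    have hz := h.indep (n + 1) e heq
    have hstep : ∀ j < n, c j = if j + 1 < n then c (j + 1) * a else 0 := by
      intro j hj
      have h0 := hz (j + 1) (by omega)
      have h1 : e (j + 1) = c j - (if j + 1 < n then c (j + 1) * a else 0) := by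
        simp [he]
      rw [h1] at h0
      exact sub_eq_zero.mp h0
    have hc0 := aux_desc a c hstep
    have h00 := hz 0 (Nat.succ_pos n)
    have h01 : e 0 = -1 := by
      rcases Nat.eq_zero_or_pos n with hn | hn
      · simp [he, hn]
      · simp [he, hn, hc0 0 hn]
    rw [h01, neg_eq_zero] at h00
    exact one_ne_zero h00
  -- Step 5: `R` is commutative.
  have hcomm : ∀ a b : R, a * b = b * a := by
    intro a b
    obtain ⟨M, hle, htwo, hinj⟩ := key _ (hspan_ne a)
    have hg : x - ι a ∈ M := hle (Ideal.subset_span rfl)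
    have h1 : (x - ι a) * ι b ∈ M := htwo _ hg (ι b)
    have h2 : ι b * (x - ι a) ∈ M := Ideal.mul_mem_left M (ι b) hg
    have h3 : ι (b * a - a * b) ∈ M := by
      have h4 : ι (b * a - a * b) = (x - ι a) * ι b - ι b * (x - ι a) := by
        rw [map_sub, map_mul, map_mul, sub_mul, mul_sub, hx b]; abel
      rw [h4]; exact sub_mem h1 h2
    have h5 := hinj _ h3
    exact (sub_eq_zero.mp h5).symm
  -- Step 6: every nonzero element of `R` is invertible.
  have hinv : ∀ a : R, a ≠ 0 → ∃ b : R, a * b = 1 := by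
    intro a ha
    by_cases hJ : Ideal.span {ι a, x} = ⊤
    · have h1 : (1 : S) ∈ Ideal.span {ι a, x} := hJ ▸ Submodule.mem_top
      rw [Ideal.span, Submodule.mem_span_pair] at h1
      obtain ⟨s, t, hst⟩ := h1
      rw [smul_eq_mul, smul_eq_mul] at hst
      obtain ⟨n, c, hcs⟩ := h.exists_repr s
      obtain ⟨m, d, hct⟩ := h.exists_repr t
      set N := n + m + 1 with hN
      set e : ℕ → R := fun i => (if i < n then c i * a else 0)
        + (if i < m + 1 then (if i = 0 then 0 else d (i - 1)) else 0)
        - (if i = 0 then 1 else 0) with he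
      have heq : ∑ i ∈ range N, ι (e i) * x ^ i = 0 := by
        simp only [he, map_add, map_sub, add_mul, sub_mul,
          Finset.sum_add_distrib, Finset.sum_sub_distrib]
        rw [← aux_pad ι x (show n ≤ N by omega) (fun i => c i * a),
          ← aux_pad ι x (show m + 1 ≤ N by omega) (fun i => if i = 0 then (0 : R) else d (i - 1)),
          ← aux_shift ι x m d, aux_single ι x (show 0 < N by omega) 1, map_one,
          ← smul_repr n c a, ← mulx_repr m d, ← hcs, ← hct, hst, sub_self]
      have hz := h.indep N e heq 0 (by omega)
      rcases Nat.eq_zero_or_pos n with hn | hn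
      · exfalso
        have : e 0 = -1 := by simp [he, hn]
        rw [this, neg_eq_zero] at hz
        exact one_ne_zero hz
      · have h6 : e 0 = c 0 * a - 1 := by simp [he, hn]
        rw [h6, sub_eq_zero] at hz
        exact ⟨c 0, by rw [hcomm a (c 0), hz]⟩
    · exfalso
      obtain ⟨M, hle, htwo, hinj⟩ := key _ hJ
      have hιa : ι a ∈ M := hle (Ideal.subset_span (by simp))
      exact ha (hinj a hιa)
  exact ⟨⟨exists_pair_ne R, fun a b => hcomm a b, fun {a} ha => hinv a ha⟩, hδ0⟩
end

section
/- If R is a ring and f : R → T is a surjective ring homomorphism with R left quasi-duo, then T is left quasi-duo. -/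
open Finset

/-- A surjective homomorphic image of a left quasi-duo ring is left quasi-duo. -/
theorem stmt6 {R T : Type*} [Ring R] [Ring T] (f : R →+* T)
    (hf : Function.Surjective f) (h : IsLeftQuasiDuo R) : IsLeftQuasiDuo T := by
  intro M hM a ha s
  have hcomax : (M.comap f).IsMaximal := Ideal.comap_isMaximal_of_surjective f hf
  obtain ⟨b, hb⟩ := hf a
  obtain ⟨r, hr⟩ := hf s
  have hbM : b ∈ M.comap f := by simpa [Ideal.mem_comap, hb] using ha
  have := h (M.comap f) hcomax b hbM r
  simpa [Ideal.mem_comap, hb, hr] using this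
end

section
/- Let S = R[x;δ] be a differential polynomial ring with J₀ = J(S) ∩ R. If R/J₀ is commutative and δ(R) ⊆ J₀, then S/J(S) is a commutative ring; in particular every left ideal of S containing J(S) is two-sided. -/
open Finset

/-!
Modulo the two-sided ideal `J(S)`, the images of `ι R` commute with each other by assumption, and
`x` commutes with each `ι a` because `x * ι a - ι a * x = ι (δ a) ∈ J(S)`. Since `S` is additively
spanned by the monomials `ι a * x ^ i`, all of `S / J(S)` is commutative. A left ideal `L ⊇ J(S)`
then absorbs right multiplication, as `a * s = s * a + (a * s - s * a)`.
-/

theorem commute_of_commute_monomials {R S T : Type*} [Semiring S] [Semiring T]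
    (f : S →+* T) (g : R → S) (x : S)
    (hspan : ∀ s : S, ∃ (n : ℕ) (c : ℕ → R), s = ∑ i ∈ range n, g (c i) * x ^ i)
    (hg : ∀ a b : R, Commute (f (g a)) (f (g b))) (hx : ∀ a : R, Commute (f x) (f (g a)))
    (s t : S) : Commute (f s) (f t) := by
  obtain ⟨n, c, rfl⟩ := hspan s
  obtain ⟨m, d, rfl⟩ := hspan t
  simp only [map_sum, map_mul, map_pow]
  refine Commute.sum_left _ _ _ fun i _ => Commute.sum_right _ _ _ fun j _ => ?_
  exact ((hg _ _).mul_left ((hx _).pow_left i)).mul_right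
    (((hx _).symm.pow_right j).mul_left (Commute.pow_pow_self _ i j))

theorem Ideal.Quotient.commute_mk_iff {S : Type*} [Ring S] (I : Ideal S) [I.IsTwoSided]
    (a b : S) : Commute (mk I a) (mk I b) ↔ a * b - b * a ∈ I := by
  rw [Commute, SemiconjBy, ← map_mul, ← map_mul, Ideal.Quotient.eq]

theorem idealIsTwoSided_of_commutator_mem {S : Type*} [Ring S] {L : Ideal S}
    (hL : ∀ s t : S, s * t - t * s ∈ L) : IdealIsTwoSided L := by
  intro a ha s
  rw [show a * s = s * a + (a * s - s * a) by abel]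
  exact L.add_mem (L.mul_mem_left s ha) (hL a s)

/-- If `R/J₀` is commutative and `δ(R) ⊆ J₀`, where `J₀ = J(S) ∩ R`, then `S/J(S)` is
commutative; in particular every left ideal of `S` containing `J(S)` is two-sided. -/
theorem stmt9 {R S : Type*} [Ring R] [Ring S]
    (ι : R →+* S) (x : S) (δ : R → R) (h : IsDiffPolyRing R S ι x δ)
    (hcomm : ∀ a b : R, ι (a * b - b * a) ∈ (⊥ : Ideal S).jacobson)
    (hδ : ∀ r : R, ι (δ r) ∈ (⊥ : Ideal S).jacobson) :
    (∀ s t : S, s * t - t * s ∈ (⊥ : Ideal S).jacobson) ∧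
      ∀ L : Ideal S, (⊥ : Ideal S).jacobson ≤ L → IdealIsTwoSided L := by
  set J := (⊥ : Ideal S).jacobson
  have hR : ∀ a b : R, ι a * ι b - ι b * ι a ∈ J := fun a b => by
    simpa only [map_sub, map_mul] using hcomm a b
  have hx : ∀ a : R, x * ι a - ι a * x ∈ J := fun a => by
    rw [h.comm a, add_sub_cancel_left]
    exact hδ a
  have hS : ∀ s t : S, s * t - t * s ∈ J := fun s t =>
    (Ideal.Quotient.commute_mk_iff J s t).mp <|
      commute_of_commute_monomials _ ι x h.exists_repr
        (fun a b => (Ideal.Quotient.commute_mk_iff J _ _).mpr (hR a b))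
        (fun a => (Ideal.Quotient.commute_mk_iff J _ _).mpr (hx a)) s t
  exact ⟨hS, fun L hJL => idealIsTwoSided_of_commutator_mem fun s t => hJL (hS s t)⟩
end

section
/- Let R be the ring of upper triangular 2×2 real matrices, A a nonzero strictly upper triangular matrix, and δ the inner derivation δ(B) = AB − BA on R. Then the differential polynomial ring R[x;δ] is left and right quasi-duo but not commutative over a noncommutative base: specifically, R/J(R) is commutative and δ(R) ⊆ J(R). -/
open Finset


def UT2 : Subring (Matrix (Fin 2) (Fin 2) ℝ) where
  carrier := {M | M 1 0 = 0}
  mul_mem' := by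
    intro A B hA hB
    simp only [Set.mem_setOf_eq] at *
    simp [Matrix.mul_apply, Fin.sum_univ_two, hA, hB]
  one_mem' := by simp [Matrix.one_apply]
  add_mem' := by
    intro A B hA hB
    simp only [Set.mem_setOf_eq] at *
    simp [Matrix.add_apply, hA, hB]
  zero_mem' := by simp
  neg_mem' := by
    intro A hA
    simp only [Set.mem_setOf_eq] at *
    simp [hA]

/-- strictly upper triangular -/
def UT2.P (r : UT2) : Prop :=
  (r : Matrix (Fin 2) (Fin 2) ℝ) 0 0 = 0 ∧ (r : Matrix (Fin 2) (Fin 2) ℝ) 1 1 = 0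

lemma UT2.low (r : UT2) : (r : Matrix (Fin 2) (Fin 2) ℝ) 1 0 = 0 := r.2

lemma UT2.mul_apply (a b : UT2) (i j : Fin 2) :
    ((a * b : UT2) : Matrix (Fin 2) (Fin 2) ℝ) i j
      = (a : Matrix (Fin 2) (Fin 2) ℝ) i 0 * (b : Matrix (Fin 2) (Fin 2) ℝ) 0 j
        + (a : Matrix (Fin 2) (Fin 2) ℝ) i 1 * (b : Matrix (Fin 2) (Fin 2) ℝ) 1 j := by
  show ((a : Matrix (Fin 2) (Fin 2) ℝ) * b) i j = _
  rw [Matrix.mul_apply, Fin.sum_univ_two]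

lemma UT2.P.mul_left {j : UT2} (r : UT2) (hj : UT2.P j) : UT2.P (r * j) := by
  constructor <;> rw [UT2.mul_apply] <;> simp [hj.1, hj.2, UT2.low j, UT2.low r]

lemma UT2.P.mul_right {j : UT2} (r : UT2) (hj : UT2.P j) : UT2.P (j * r) := by
  constructor <;> rw [UT2.mul_apply] <;> simp [hj.1, hj.2, UT2.low r, UT2.low j]

lemma UT2.P.sub {a b : UT2} (ha : UT2.P a) (hb : UT2.P b) : UT2.P (a - b) := by
  constructor <;> show ((a : Matrix (Fin 2) (Fin 2) ℝ) - b) _ _ = 0 <;>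
    simp [Matrix.sub_apply, ha.1, ha.2, hb.1, hb.2]

lemma UT2.P.mul_eq_zero {a b : UT2} (ha : UT2.P a) (hb : UT2.P b) : a * b = 0 := by
  apply Subtype.ext
  ext i k
  rw [UT2.mul_apply]
  fin_cases i <;> fin_cases k <;>
    simp [ha.1, ha.2, hb.1, hb.2, UT2.low a, UT2.low b]

lemma UT2.P.comm (B C : UT2) : UT2.P (B * C - C * B) := by
  constructor <;>
    show ((B * C : UT2) : Matrix (Fin 2) (Fin 2) ℝ) _ _
        - ((C * B : UT2) : Matrix (Fin 2) (Fin 2) ℝ) _ _ = 0 <;>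
    rw [UT2.mul_apply, UT2.mul_apply] <;> simp [UT2.low B, UT2.low C] <;> ring

/-- If `t * (c * t) = 0` for all `c`, then `t` lies in every maximal left ideal. -/
lemma mem_of_isMaximal_of_nil {S : Type*} [Ring S] {M : Ideal S} (hM : M.IsMaximal) {t : S}
    (hnil : ∀ c : S, t * (c * t) = 0) : t ∈ M := by
  by_contra htM
  have hlt : M < M ⊔ Ideal.span {t} := by
    refine lt_of_le_of_ne le_sup_left fun he => htM ?_
    rw [he]
    exact (le_sup_right : Ideal.span {t} ≤ _) (Ideal.mem_span_singleton_self t)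
  have htop : M ⊔ Ideal.span {t} = ⊤ := hM.1.2 _ hlt
  have h1 : (1 : S) ∈ M ⊔ Ideal.span {t} := htop ▸ Submodule.mem_top
  obtain ⟨m, hm, r, hr, hmr⟩ := Submodule.mem_sup.mp h1
  obtain ⟨a, ha⟩ := Ideal.mem_span_singleton'.mp hr
  have hr2 : r * r = 0 := by
    rw [← ha, mul_assoc, hnil, mul_zero]
  have hu : IsUnit m := by
    have hm1 : m = 1 - r := by rw [← hmr]; noncomm_ring
    refine ⟨⟨m, 1 + r, ?_, ?_⟩, rfl⟩
    · have : m * (1 + r) = 1 - r * r := by rw [hm1]; noncomm_ring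
      rw [this, hr2, sub_zero]
    · have : (1 + r) * m = 1 - r * r := by rw [hm1]; noncomm_ring
      rw [this, hr2, sub_zero]
  exact hM.ne_top (Ideal.eq_top_of_isUnit_mem M hm hu)

lemma UT2.P.mem_jacobson {n : UT2} (hn : UT2.P n) : n ∈ (⊥ : Ideal UT2).jacobson := by
  rw [Ideal.jacobson]
  rw [Ideal.mem_sInf]
  rintro M ⟨-, hM⟩
  exact mem_of_isMaximal_of_nil hM fun c => hn.mul_eq_zero (UT2.P.mul_left c hn)

/-- Abstract quasi-duo criterion: a left ideal `I` with `I * I = 0` containing all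
commutators forces every maximal left ideal to be two-sided. -/
lemma isLeftQuasiDuo_of_ideal {S : Type*} [Ring S] (I : Ideal S)
    (h2 : ∀ a ∈ I, ∀ b ∈ I, a * b = 0)
    (hc : ∀ a s : S, a * s - s * a ∈ I) :
    ∀ M : Ideal S, M.IsMaximal → ∀ a ∈ M, ∀ s : S, a * s ∈ M := by
  intro M hM a ha s
  have hIM : ∀ u ∈ I, u ∈ M := by
    intro u hu
    exact mem_of_isMaximal_of_nil hM fun c => h2 u hu _ (I.mul_mem_left c hu)
  have : a * s = s * a + (a * s - s * a) := by noncomm_ring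
  rw [this]
  exact M.add_mem (M.mul_mem_left s ha) (hIM _ (hc a s))

/-- Let `R` be the upper triangular `2 × 2` real matrices, `A ∈ J(R)` a nonzero strictly
upper triangular matrix, and `δ(B) = A*B - B*A` the corresponding inner derivation.
Then `δ(R) ⊆ J(R)`, `R/J(R)` is commutative, and the differential polynomial ring
`R[x;δ]` is left and right quasi-duo. -/
theorem stmt10 (A : UT2) (hA00 : (A : Matrix (Fin 2) (Fin 2) ℝ) 0 0 = 0)
    (hA11 : (A : Matrix (Fin 2) (Fin 2) ℝ) 1 1 = 0) (hAne : A ≠ 0)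
    (δ : UT2 → UT2) (hδ : ∀ B : UT2, δ B = A * B - B * A)
    {S : Type*} [Ring S] (ι : UT2 →+* S) (x : S)
    (h : IsDiffPolyRing UT2 S ι x δ) :
    (∀ B : UT2, δ B ∈ (⊥ : Ideal UT2).jacobson) ∧
    (∀ B C : UT2, B * C - C * B ∈ (⊥ : Ideal UT2).jacobson) ∧
    IsLeftQuasiDuo S ∧ IsRightQuasiDuo S := by
  have hAP : UT2.P A := ⟨hA00, hA11⟩
  have hδP : ∀ B : UT2, UT2.P (δ B) := fun B => by
    rw [hδ]; exact (UT2.P.mul_right B hAP).sub (UT2.P.mul_left B hAP)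
  have hδ0 : ∀ j : UT2, UT2.P j → δ j = 0 := fun j hj => by
    rw [hδ, hAP.mul_eq_zero hj, hj.mul_eq_zero hAP, sub_zero]
  -- x commutes with ι of strictly upper triangular elements
  have hxj : ∀ j : UT2, UT2.P j → x * ι j = ι j * x := fun j hj => by
    rw [h.comm, hδ0 j hj, map_zero, add_zero]
  have hxnj : ∀ (n : ℕ) (j : UT2), UT2.P j → x ^ n * ι j = ι j * x ^ n := by
    intro n j hj
    induction n with
    | zero => simp
    | succ n ih => rw [pow_succ, mul_assoc, hxj j hj, ← mul_assoc, ih, mul_assoc]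
  set I : Ideal S := Ideal.span (ι '' {r : UT2 | UT2.P r}) with hI
  have hgen : ∀ j : UT2, UT2.P j → ι j ∈ I := fun j hj =>
    Ideal.subset_span ⟨j, hj, rfl⟩
  have hmono : ∀ (n : ℕ) (j : UT2), UT2.P j → ι j * x ^ n ∈ I := by
    intro n j hj
    rw [← hxnj n j hj]
    exact I.mul_mem_left _ (hgen j hj)
  -- normal form of ι j * s
  have hjs : ∀ (j : UT2), UT2.P j → ∀ s : S, ∃ (n : ℕ) (c : ℕ → UT2),
      (∀ i, UT2.P (c i)) ∧ ι j * s = ∑ i ∈ Finset.range n, ι (c i) * x ^ i := by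
    intro j hj s
    obtain ⟨n, d, rfl⟩ := h.exists_repr s
    refine ⟨n, fun i => j * d i, fun i => UT2.P.mul_right (d i) hj, ?_⟩
    rw [Finset.mul_sum]
    refine Finset.sum_congr rfl fun i _ => ?_
    rw [← mul_assoc, ← map_mul]
  have hjsI : ∀ (j : UT2), UT2.P j → ∀ s : S, ι j * s ∈ I := by
    intro j hj s
    obtain ⟨n, c, hc, he⟩ := hjs j hj s
    rw [he]
    exact Ideal.sum_mem I fun i _ => hmono i (c i) (hc i)
  -- I absorbs multiplication on the right
  have hIabs : ∀ t ∈ I, ∀ s : S, t * s ∈ I := by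
    intro t ht
    induction ht using Submodule.span_induction with
    | mem u hu =>
      obtain ⟨j, hj, rfl⟩ := hu
      exact fun s => hjsI j hj s
    | zero => intro s; rw [zero_mul]; exact I.zero_mem
    | add u v hu hv ihu ihv => intro s; rw [add_mul]; exact I.add_mem (ihu s) (ihv s)
    | smul r u hu ihu =>
      intro s
      rw [smul_eq_mul, mul_assoc]
      exact I.mul_mem_left r (ihu s)
  -- products of elements of I vanish
  have hZ : ∀ (j j' : UT2), UT2.P j → UT2.P j' → ∀ u : S, ι j * u * ι j' = 0 := by
    intro j j' hj hj' u
    obtain ⟨n, c, hc, he⟩ := hjs j hj u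
    rw [he, Finset.sum_mul]
    refine Finset.sum_eq_zero fun i _ => ?_
    rw [mul_assoc, hxnj i j' hj', ← mul_assoc, ← map_mul,
      (hc i).mul_eq_zero hj', map_zero, zero_mul]
  have haux : ∀ b ∈ I, ∀ (j : UT2), UT2.P j → ∀ u : S, ι j * (u * b) = 0 := by
    intro b hb
    induction hb using Submodule.span_induction with
    | mem v hv =>
      obtain ⟨j', hj', rfl⟩ := hv
      intro j hj u
      rw [← mul_assoc]
      exact hZ j j' hj hj' u
    | zero => intro j hj u; rw [mul_zero, mul_zero]
    | add u v hu hv ihu ihv =>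
      intro j hj w
      rw [mul_add, mul_add, ihu j hj w, ihv j hj w, add_zero]
    | smul r v hv ihv =>
      intro j hj u
      rw [smul_eq_mul, ← mul_assoc u r v]
      exact ihv j hj (u * r)
  have h2 : ∀ a ∈ I, ∀ b ∈ I, a * b = 0 := by
    intro a ha
    induction ha using Submodule.span_induction with
    | mem v hv =>
      obtain ⟨j, hj, rfl⟩ := hv
      intro b hb
      have := haux b hb j hj 1
      rwa [one_mul] at this
    | zero => intro b hb; rw [zero_mul]
    | add u v hu hv ihu ihv => intro b hb; rw [add_mul, ihu b hb, ihv b hb, add_zero]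
    | smul r v hv ihv => intro b hb; rw [smul_eq_mul, mul_assoc, ihv b hb, mul_zero]
  -- key commutation lemma: x^n almost commutes with ι d modulo I
  have hL1 : ∀ (n : ℕ) (d : UT2), x ^ n * ι d - ι d * x ^ n ∈ I := by
    intro n d
    induction n with
    | zero => simp
    | succ n ih =>
      have e : x ^ (n + 1) * ι d - ι d * x ^ (n + 1)
          = ι (δ d) * x ^ n + x * (x ^ n * ι d - ι d * x ^ n) := by
        rw [pow_succ' x n, mul_sub, ← mul_assoc x (ι d) (x ^ n), h.comm d]
        noncomm_ring
      rw [e]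
      exact I.add_mem (hmono n (δ d) (hδP d)) (I.mul_mem_left x ih)
  -- commutators of monomials lie in I
  have hmonocomm : ∀ (i : ℕ) (c : UT2) (j : ℕ) (d : UT2),
      ι c * x ^ i * (ι d * x ^ j) - ι d * x ^ j * (ι c * x ^ i) ∈ I := by
    intro i c j d
    have hpow : x ^ j * x ^ i = x ^ i * x ^ j := by
      rw [← pow_add, ← pow_add, add_comm]
    have e : ι c * x ^ i * (ι d * x ^ j) - ι d * x ^ j * (ι c * x ^ i)
        = ι c * ι d * (x ^ i * x ^ j) - ι d * ι c * (x ^ j * x ^ i)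
          + ι c * (x ^ i * ι d - ι d * x ^ i) * x ^ j
          - ι d * (x ^ j * ι c - ι c * x ^ j) * x ^ i := by
      noncomm_ring
    have e2 : ι (c * d) * (x ^ i * x ^ j) - ι (d * c) * (x ^ i * x ^ j)
        = ι (c * d - d * c) * x ^ (i + j) := by
      rw [map_sub, sub_mul, pow_add]
    rw [e, hpow, ← map_mul, ← map_mul, e2]
    refine I.sub_mem (I.add_mem (hmono (i + j) _ (UT2.P.comm c d)) ?_) ?_
    · exact hIabs _ (I.mul_mem_left (ι c) (hL1 i d)) (x ^ j)
    · exact hIabs _ (I.mul_mem_left (ι d) (hL1 j c)) (x ^ i)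
  -- all commutators in S lie in I
  have hsub : ∀ a s : S, a * s - s * a ∈ I := by
    intro a s
    obtain ⟨n, p, hp⟩ := h.exists_repr a
    obtain ⟨m, q, hq⟩ := h.exists_repr s
    rw [hp, hq, Finset.sum_mul_sum, Finset.sum_mul_sum]
    rw [show (∑ j ∈ Finset.range m, ∑ i ∈ Finset.range n,
          (ι (q j) * x ^ j) * (ι (p i) * x ^ i))
        = ∑ i ∈ Finset.range n, ∑ j ∈ Finset.range m,
          (ι (q j) * x ^ j) * (ι (p i) * x ^ i) from Finset.sum_comm]
    rw [← Finset.sum_sub_distrib]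
    refine Ideal.sum_mem I fun i _ => ?_
    rw [← Finset.sum_sub_distrib]
    exact Ideal.sum_mem I fun j _ => hmonocomm i (p i) j (q j)
  have hQD : IsLeftQuasiDuo S := fun M hM => isLeftQuasiDuo_of_ideal I h2 hsub M hM
  -- the opposite ring
  let Iop : Ideal Sᵐᵒᵖ :=
    { carrier := {t | t.unop ∈ I}
      add_mem' := fun {a b} ha hb => by
        show (a + b).unop ∈ I
        rw [MulOpposite.unop_add]
        exact I.add_mem ha hb
      zero_mem' := by
        show (0 : Sᵐᵒᵖ).unop ∈ I
        rw [MulOpposite.unop_zero]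
        exact I.zero_mem
      smul_mem' := fun r t ht => by
        show (r * t).unop ∈ I
        rw [MulOpposite.unop_mul]
        exact hIabs _ ht r.unop }
  have hmemIop : ∀ t : Sᵐᵒᵖ, t ∈ Iop ↔ t.unop ∈ I := fun t => Iff.rfl
  have h2' : ∀ a ∈ Iop, ∀ b ∈ Iop, a * b = 0 := by
    intro a ha b hb
    apply MulOpposite.unop_injective
    rw [MulOpposite.unop_mul, MulOpposite.unop_zero]
    exact h2 _ ((hmemIop b).mp hb) _ ((hmemIop a).mp ha)
  have hc' : ∀ a s : Sᵐᵒᵖ, a * s - s * a ∈ Iop := by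
    intro a s
    rw [hmemIop, MulOpposite.unop_sub, MulOpposite.unop_mul, MulOpposite.unop_mul]
    exact hsub s.unop a.unop
  exact ⟨fun B => (hδP B).mem_jacobson, fun B C => (UT2.P.comm B C).mem_jacobson, hQD,
    fun M hM => isLeftQuasiDuo_of_ideal Iop h2' hc' M hM⟩
end

section
/- The free associative algebra K⟨X⟩ over a field K in at least two non-commuting indeterminates is not left quasi-duo. -/
open Finset

/-- The free associative algebra over a field in at least two non-commuting
indeterminates is not left quasi-duo. -/
theorem stmt18 {K : Type*} [Field K] {X : Type*} (hX : ∃ a b : X, a ≠ b) :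
    ¬ IsLeftQuasiDuo (FreeAlgebra K X) := by
  intro hQD
  obtain ⟨a, b, hab⟩ := hX
  classical
  set E01 : Matrix (Fin 2) (Fin 2) K := Matrix.single 0 1 1 with hE01
  set E10 : Matrix (Fin 2) (Fin 2) K := Matrix.single 1 0 1 with hE10
  set f : FreeAlgebra K X →ₐ[K] Matrix (Fin 2) (Fin 2) K :=
    FreeAlgebra.lift K (fun v => if v = a then E01 else if v = b then E10 else 0) with hf
  have hfa : f (FreeAlgebra.ι K a) = E01 := by simp [hf]
  have hfb : f (FreeAlgebra.ι K b) = E10 := by simp [hf, Ne.symm hab]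
  set I : Ideal (FreeAlgebra K X) :=
    { carrier := {s | ∀ i, f s i 0 = 0}
      add_mem' := fun hx hy i => by simp [map_add, hx i, hy i]
      zero_mem' := fun i => by simp
      smul_mem' := by
        intro c x hx
        intro i
        simp only [Set.mem_setOf_eq, smul_eq_mul, map_mul, Matrix.mul_apply]
        exact Finset.sum_eq_zero fun k _ => by rw [hx k, mul_zero] } with hI
  have hItop : I ≠ ⊤ := by
    intro h
    have h1 : (1 : FreeAlgebra K X) ∈ I := h ▸ Submodule.mem_top
    have := h1 0
    simp [Matrix.one_apply] at this
  obtain ⟨M, hM, hIM⟩ := Ideal.exists_le_maximal I hItop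
  have haM : FreeAlgebra.ι K a ∈ M := by
    refine hIM ?_
    intro i
    rw [hfa, hE01]
    fin_cases i <;> simp [Matrix.single]
  have h1 : FreeAlgebra.ι K a * FreeAlgebra.ι K b ∈ M := hQD M hM _ haM _
  have h2 : FreeAlgebra.ι K b * FreeAlgebra.ι K a ∈ M := M.smul_mem _ haM
  have hu : FreeAlgebra.ι K a * FreeAlgebra.ι K b + FreeAlgebra.ι K b * FreeAlgebra.ι K a ∈ M :=
    M.add_mem h1 h2
  have hmat : E01 * E10 + E10 * E01 = (1 : Matrix (Fin 2) (Fin 2) K) := by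
    ext i j
    fin_cases i <;> fin_cases j <;>
      simp [hE01, hE10, Matrix.mul_apply, Matrix.single, Matrix.one_apply,
        Fin.sum_univ_two]
  have hker : (FreeAlgebra.ι K a * FreeAlgebra.ι K b + FreeAlgebra.ι K b * FreeAlgebra.ι K a)
      - 1 ∈ I := by
    have hf0 : f ((FreeAlgebra.ι K a * FreeAlgebra.ι K b
        + FreeAlgebra.ι K b * FreeAlgebra.ι K a) - 1) = 0 := by
      rw [map_sub, map_add, map_mul, map_mul, hfa, hfb, hmat, map_one, sub_self]
    intro i
    rw [hf0]
    simp
  have h1M : (1 : FreeAlgebra K X) ∈ M := by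
    have := M.sub_mem hu (hIM hker)
    simpa using this
  exact hM.ne_top (Ideal.eq_top_of_isUnit_mem M h1M isUnit_one)
end
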